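/- arXiv:1802.01412 — 2 statements merged into one kernel-verified Lean document; each statement's English description precedes it below -/
import Mathlib

section
/- Let ε > 0 and c₊, c₋ > 0, and let 0 < R₀ < R. Then |∫_{R₀}^{R} x/(ε + c₊(x − R₀)²) dx + ∫_{−R}^{−R₀} x/(ε + c₋(x + R₀)²) dx| ≤ |1/(2c₊) − 1/(2c₋)|·|log ε| + C·R₀/√ε + C, where C depends only on c₊, c₋, R₀, R (and not on ε), for all 0 < ε < 1/2. -/
/-!
Reflecting `x ↦ -x` turns the second integral into minus the first one with `c₋` in place of
`c₊`, so it suffices to understand `G(c) = ∫_{R₀}^{R} x / (ε + c (x - R₀)²) dx`. Writing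
`x = (x - R₀) + R₀`, the first part integrates to `(log (ε + c (R - R₀)²) - log ε) / (2c)`, an
exact logarithm whose `ε`-dependent piece is `-log ε / (2c)`, while the second part is `R₀` times
an arctangent integral of size at most `π / √(c ε)`. In `G(c₊) - G(c₋)` the two `log ε` terms
combine to `(1/(2c₋) - 1/(2c₊)) log ε` and everything else is `O(1) + O(R₀ / √ε)`.
-/

open Real intervalIntegral

section QuadraticDenominator

variable {ε c : ℝ}

lemma intervalIntegrable_sub_div_quadratic (hε : 0 < ε) (hc : 0 < c) (s a b : ℝ) :
    IntervalIntegrable (fun x => (x - s) / (ε + c * (x - s) ^ 2)) MeasureTheory.volume a b :=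
  ((continuous_id.sub continuous_const).div (by fun_prop) fun x => by positivity
    ).intervalIntegrable _ _

lemma intervalIntegrable_one_div_quadratic (hε : 0 < ε) (hc : 0 < c) (s a b : ℝ) :
    IntervalIntegrable (fun x => 1 / (ε + c * (x - s) ^ 2)) MeasureTheory.volume a b :=
  (continuous_const.div (by fun_prop) fun x => by positivity).intervalIntegrable _ _

lemma integral_sub_div_quadratic (hε : 0 < ε) (hc : 0 < c) (s a b : ℝ) :
    ∫ x in a..b, (x - s) / (ε + c * (x - s) ^ 2)
      = (log (ε + c * (b - s) ^ 2) - log (ε + c * (a - s) ^ 2)) / (2 * c) := by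
  have hderiv : ∀ x ∈ Set.uIcc a b, HasDerivAt (fun x => log (ε + c * (x - s) ^ 2) / (2 * c))
      ((x - s) / (ε + c * (x - s) ^ 2)) x := by
    intro x _
    have hq : HasDerivAt (fun x : ℝ => ε + c * (x - s) ^ 2) (c * (2 * (x - s) ^ 1 * 1)) x :=
      ((((hasDerivAt_id x).sub_const s).pow 2).const_mul c).const_add ε
    refine ((hq.log (by positivity)).div_const (2 * c)).congr_deriv ?_
    have : ε + c * (x - s) ^ 2 ≠ 0 := by positivity
    field_simp
  rw [integral_eq_sub_of_hasDerivAt hderiv (intervalIntegrable_sub_div_quadratic hε hc s a b)]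
  ring

lemma abs_integral_one_div_quadratic_le (hε : 0 < ε) (hc : 0 < c) (s a b : ℝ) :
    |∫ x in a..b, 1 / (ε + c * (x - s) ^ 2)| ≤ π / (√c * √ε) := by
  have hc2 : √c ^ 2 = c := sq_sqrt hc.le
  have hε2 : √ε ^ 2 = ε := sq_sqrt hε.le
  have hderiv : ∀ x ∈ Set.uIcc a b,
      HasDerivAt (fun x => arctan (√c / √ε * (x - s)) / (√c * √ε))
        (1 / (ε + c * (x - s) ^ 2)) x := by
    intro x _
    have hlin : HasDerivAt (fun x : ℝ => √c / √ε * (x - s)) (√c / √ε) x := by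
      simpa using ((hasDerivAt_id x).sub_const s).const_mul (√c / √ε)
    refine (hlin.arctan.div_const (√c * √ε)).congr_deriv ?_
    have : ε + c * (x - s) ^ 2 ≠ 0 := by positivity
    have : 0 < √ε := sqrt_pos.2 hε
    have : 0 < √c := sqrt_pos.2 hc
    field_simp
    linear_combination -hε2 - (x - s) ^ 2 * hc2
  rw [integral_eq_sub_of_hasDerivAt hderiv (intervalIntegrable_one_div_quadratic hε hc s a b),
    ← sub_div, abs_div, abs_of_pos (by positivity : 0 < √c * √ε)]
  gcongr
  have hb := arctan_mem_Ioo (√c / √ε * (b - s))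
  have ha := arctan_mem_Ioo (√c / √ε * (a - s))
  rw [abs_sub_le_iff]
  constructor <;> linarith [ha.1, ha.2, hb.1, hb.2]

lemma integral_id_div_quadratic_eq (hε : 0 < ε) (hc : 0 < c) (s b : ℝ) :
    ∫ x in s..b, x / (ε + c * (x - s) ^ 2)
      = (log (ε + c * (b - s) ^ 2) - log ε) / (2 * c)
        + s * ∫ x in s..b, 1 / (ε + c * (x - s) ^ 2) := by
  have hsplit : ∫ x in s..b, x / (ε + c * (x - s) ^ 2)
      = (∫ x in s..b, (x - s) / (ε + c * (x - s) ^ 2))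
        + s * ∫ x in s..b, 1 / (ε + c * (x - s) ^ 2) := by
    rw [← integral_const_mul, ← integral_add (intervalIntegrable_sub_div_quadratic hε hc s s b)
      ((intervalIntegrable_one_div_quadratic hε hc s s b).const_mul s)]
    refine integral_congr fun x _ => ?_
    have : ε + c * (x - s) ^ 2 ≠ 0 := by positivity
    field_simp
    ring
  rw [hsplit, integral_sub_div_quadratic hε hc, sub_self, zero_pow two_ne_zero, mul_zero,
    add_zero]

lemma integral_id_div_quadratic_neg (ε c s a b : ℝ) :
    ∫ x in (-b)..(-a), x / (ε + c * (x + s) ^ 2) = -∫ x in a..b, x / (ε + c * (x - s) ^ 2) := by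
  rw [← integral_comp_neg (fun x => x / (ε + c * (x + s) ^ 2)), ← integral_neg]
  refine integral_congr fun x _ => ?_
  ring

lemma abs_integral_id_div_quadratic_add_log_le (hε : 0 < ε) (hε1 : ε ≤ 1) (hc : 0 < c)
    {s b : ℝ} (hsb : s ≠ b) :
    |(∫ x in s..b, x / (ε + c * (x - s) ^ 2)) + log ε / (2 * c)|
      ≤ max |log (c * (b - s) ^ 2)| |log (1 + c * (b - s) ^ 2)| / (2 * c)
        + π / √c * |s| / √ε := by
  have hcL : 0 < c * (b - s) ^ 2 := mul_pos hc (sq_pos_of_ne_zero (sub_ne_zero.2 hsb.symm))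
  have hlog : |log (ε + c * (b - s) ^ 2)|
      ≤ max |log (c * (b - s) ^ 2)| |log (1 + c * (b - s) ^ 2)| :=
    abs_le_max_abs_abs (log_le_log hcL (by linarith)) (log_le_log (by positivity) (by linarith))
  have harctan := abs_integral_one_div_quadratic_le hε hc s s b
  rw [integral_id_div_quadratic_eq hε hc]
  calc |(log (ε + c * (b - s) ^ 2) - log ε) / (2 * c)
          + s * (∫ x in s..b, 1 / (ε + c * (x - s) ^ 2)) + log ε / (2 * c)|
      = |log (ε + c * (b - s) ^ 2) / (2 * c) + s * ∫ x in s..b, 1 / (ε + c * (x - s) ^ 2)| := by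
        ring_nf
    _ ≤ |log (ε + c * (b - s) ^ 2)| / (2 * c)
          + |s| * |∫ x in s..b, 1 / (ε + c * (x - s) ^ 2)| := by
        refine (abs_add_le _ _).trans_eq ?_
        rw [abs_mul, abs_div, abs_of_pos (by positivity : 0 < 2 * c)]
    _ ≤ max |log (c * (b - s) ^ 2)| |log (1 + c * (b - s) ^ 2)| / (2 * c)
          + |s| * (π / (√c * √ε)) := by gcongr
    _ = _ := by ring

end QuadraticDenominator

/-- Cancellation of the two Taylor-model integrals on either side of the flat
segment `[-R₀, R₀]`, with logarithmic discrepancy controlled by the curvature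
difference `|1/(2c₊) - 1/(2c₋)|`. -/
theorem stmt_16 (cp cm R₀ R : ℝ) (hcp : 0 < cp) (hcm : 0 < cm)
    (hR₀ : 0 < R₀) (hR : R₀ < R) :
    ∃ C : ℝ, 0 < C ∧ ∀ ε : ℝ, 0 < ε → ε < 1 / 2 →
      |(∫ x in R₀..R, x / (ε + cp * (x - R₀) ^ 2)) +
        (∫ x in (-R)..(-R₀), x / (ε + cm * (x + R₀) ^ 2))|
        ≤ |1 / (2 * cp) - 1 / (2 * cm)| * |Real.log ε|
          + C * R₀ / Real.sqrt ε + C := by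
  refine ⟨max |log (cp * (R - R₀) ^ 2)| |log (1 + cp * (R - R₀) ^ 2)| / (2 * cp)
    + max |log (cm * (R - R₀) ^ 2)| |log (1 + cm * (R - R₀) ^ 2)| / (2 * cm)
    + π / √cp + π / √cm, by positivity, fun ε hε hε2 => ?_⟩
  have hp := abs_integral_id_div_quadratic_add_log_le hε (by linarith) hcp hR.ne
  have hm := abs_integral_id_div_quadratic_add_log_le hε (by linarith) hcm hR.ne
  rw [abs_of_pos hR₀] at hp hm
  rw [integral_id_div_quadratic_neg]
  set Kp := max |log (cp * (R - R₀) ^ 2)| |log (1 + cp * (R - R₀) ^ 2)| / (2 * cp)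
  set Km := max |log (cm * (R - R₀) ^ 2)| |log (1 + cm * (R - R₀) ^ 2)| / (2 * cm)
  set Gp := ∫ x in R₀..R, x / (ε + cp * (x - R₀) ^ 2)
  set Gm := ∫ x in R₀..R, x / (ε + cm * (x - R₀) ^ 2)
  have htri : |Gp + -Gm| ≤ |1 / (2 * cp) - 1 / (2 * cm)| * |log ε|
      + |Gp + log ε / (2 * cp)| + |Gm + log ε / (2 * cm)| := by
    have hsplit : Gp + -Gm = -((1 / (2 * cp) - 1 / (2 * cm)) * log ε)
        + (Gp + log ε / (2 * cp)) - (Gm + log ε / (2 * cm)) := by ring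
    rw [hsplit, ← abs_mul, ← abs_neg ((1 / (2 * cp) - 1 / (2 * cm)) * log ε)]
    exact (abs_sub _ _).trans (add_le_add_left (abs_add_le _ _) _)
  have hexpand : (Kp + Km + π / √cp + π / √cm) * R₀ / √ε
      = (Kp + Km) * (R₀ / √ε) + π / √cp * R₀ / √ε + π / √cm * R₀ / √ε := by ring
  have hK : 0 ≤ (Kp + Km) * (R₀ / √ε) := by positivity
  have hπp : 0 < π / √cp := by positivity
  have hπm : 0 < π / √cm := by positivity
  linarith
end

section
/- Let m ≥ 2 be an integer, d ≥ 2 an integer, and R > 0, and suppose m > 2d. Then there is a constant C > 0 such that for all 0 < ε < 1/2, ∫₀^R ρ^{d-1}/√(ε + ρ^m) dρ ≤ C·ε^{(2d − m)/(2m)}. -/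
open Real MeasureTheory intervalIntegral

/-- For integers `m, d ≥ 2` with `m > 2d` and fixed `R > 0`, there is `C > 0`
such that `∫₀^R ρ^(d-1)/√(ε + ρ^m) dρ ≤ C ε^((2d - m)/(2m))` for `0 < ε < 1/2`. -/
theorem stmt_18 (m d : ℕ) (hm : 2 ≤ m) (hd : 2 ≤ d) (hmd : 2 * d < m)
    (R : ℝ) (hR : 0 < R) :
    ∃ C : ℝ, 0 < C ∧ ∀ ε : ℝ, 0 < ε → ε < 1 / 2 →
      (∫ ρ in (0 : ℝ)..R, ρ ^ (d - 1) / Real.sqrt (ε + ρ ^ m))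
        ≤ C * ε ^ ((2 * (d : ℝ) - m) / (2 * m)) := by
  have hm0 : (0:ℝ) < m := by exact_mod_cast lt_of_lt_of_le (by norm_num) hm
  have hd0 : (0:ℝ) < d := by exact_mod_cast lt_of_lt_of_le (by norm_num) hd
  have hmd' : 2 * (d:ℝ) < m := by exact_mod_cast hmd
  set e : ℝ := (2 * (d : ℝ) - m) / (2 * m) with he_def
  refine ⟨1/(d:ℝ) + 2/((m:ℝ) - 2*d), by
    have h1 : (0:ℝ) < 1/(d:ℝ) := by positivity
    have h2 : (0:ℝ) < 2/((m:ℝ) - 2*d) := div_pos (by norm_num) (by linarith)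
    linarith, ?_⟩
  intro ε hε hε2
  set α : ℝ := ε ^ ((1:ℝ)/m) with hα_def
  have hα0 : 0 < α := Real.rpow_pos_of_pos hε _
  have hεe : 0 < ε ^ e := Real.rpow_pos_of_pos hε _
  have hd1 : 1 ≤ d := le_trans (by norm_num) hd
  -- basic rpow facts
  have hαd : α ^ d = ε ^ ((d:ℝ)/m) := by
    rw [← Real.rpow_natCast α d, hα_def, ← Real.rpow_mul hε.le]
    congr 1; field_simp
  have hsq : Real.sqrt ε = ε ^ ((1:ℝ)/2) := Real.sqrt_eq_rpow ε
  have hkey : ε ^ ((d:ℝ)/m) / Real.sqrt ε = ε ^ e := by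
    rw [hsq, ← Real.rpow_sub hε]
    congr 1; rw [he_def]; field_simp
  -- integrability of the integrand on subintervals of [0, ∞)
  have hInt : ∀ a b : ℝ, 0 ≤ a → a ≤ b →
      IntervalIntegrable (fun ρ => ρ ^ (d - 1) / Real.sqrt (ε + ρ ^ m)) volume a b := by
    intro a b ha hab
    apply ContinuousOn.intervalIntegrable
    refine ContinuousOn.div ((continuous_pow (d-1)).continuousOn)
      ((continuous_const.add (continuous_pow m)).sqrt.continuousOn) ?_
    intro x hx
    rw [Set.uIcc_of_le hab] at hx
    have hx0 : 0 ≤ x := le_trans ha hx.1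
    have hpos : 0 < ε + x ^ m := by positivity
    exact Real.sqrt_ne_zero'.mpr hpos
  -- the easy comparison on [0, b] : integrand ≤ ρ^(d-1)/√ε
  have hEasy : ∀ b : ℝ, 0 < b →
      (∫ ρ in (0:ℝ)..b, ρ ^ (d - 1) / Real.sqrt (ε + ρ ^ m)) ≤ b ^ d / d / Real.sqrt ε := by
    intro b hb
    have hgInt : IntervalIntegrable (fun ρ => ρ ^ (d-1) / Real.sqrt ε) volume 0 b :=
      (((continuous_pow (d-1)).div_const _).intervalIntegrable 0 b)
    have hmono := intervalIntegral.integral_mono_on hb.le (hInt 0 b le_rfl hb.le) hgInt ?_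
    · refine le_trans hmono (le_of_eq ?_)
      rw [intervalIntegral.integral_div, integral_pow]
      have hd' : d - 1 + 1 = d := Nat.sub_add_cancel hd1
      rw [hd']
      have hc : ((d-1:ℕ):ℝ) + 1 = (d:ℝ) := by rw [Nat.cast_sub hd1]; push_cast; ring
      rw [hc]
      simp [zero_pow (by omega : d ≠ 0)]
    · intro x hx
      have hx0 : 0 ≤ x := hx.1
      have h1 : Real.sqrt ε ≤ Real.sqrt (ε + x ^ m) :=
        Real.sqrt_le_sqrt (le_add_of_nonneg_right (pow_nonneg hx0 m))
      have h2 : 0 < Real.sqrt ε := Real.sqrt_pos.mpr hε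
      gcongr
  rcases le_or_gt α R with hcase | hcase
  · -- split the integral at α
    have hsplit :
        (∫ ρ in (0:ℝ)..R, ρ ^ (d - 1) / Real.sqrt (ε + ρ ^ m))
          = (∫ ρ in (0:ℝ)..α, ρ ^ (d - 1) / Real.sqrt (ε + ρ ^ m))
            + ∫ ρ in α..R, ρ ^ (d - 1) / Real.sqrt (ε + ρ ^ m) :=
      (intervalIntegral.integral_add_adjacent_intervals (hInt 0 α le_rfl hα0.le)
        (hInt α R hα0.le hcase)).symm
    -- first piece
    have hI1 : (∫ ρ in (0:ℝ)..α, ρ ^ (d - 1) / Real.sqrt (ε + ρ ^ m)) ≤ ε ^ e * (1/d) := by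
      refine le_trans (hEasy α hα0) (le_of_eq ?_)
      rw [hαd, div_div, mul_comm (d:ℝ), ← div_div, hkey]
      ring
    -- second piece
    set s : ℝ := (d:ℝ) - (m:ℝ)/2 with hs_def
    have hs_neg : s < 0 := by rw [hs_def]; linarith
    have hαs : α ^ s = ε ^ e := by
      rw [hα_def, ← Real.rpow_mul hε.le]
      congr 1; rw [he_def, hs_def]; field_simp
    have hI2 : (∫ ρ in α..R, ρ ^ (d - 1) / Real.sqrt (ε + ρ ^ m))
        ≤ ε ^ e * (2/((m:ℝ) - 2*d)) := by
      have h0not : (0:ℝ) ∉ Set.uIcc α R := by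
        rw [Set.uIcc_of_le hcase]
        intro h; exact absurd h.1 (not_le.mpr hα0)
      have hgInt : IntervalIntegrable (fun ρ => ρ ^ ((d:ℝ) - 1 - m/2)) volume α R :=
        intervalIntegrable_rpow (Or.inr h0not)
      have hmono := intervalIntegral.integral_mono_on hcase (hInt α R hα0.le hcase) hgInt ?_
      · refine le_trans hmono ?_
        rw [integral_rpow (Or.inr ⟨by
          intro h
          have h2d : 2*(d:ℝ) = m := by linarith [sub_eq_iff_eq_add.mp h]
          linarith, h0not⟩)]
        have hexp : (d:ℝ) - 1 - m/2 + 1 = s := by rw [hs_def]; ring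
        rw [hexp, hαs]
        have hRs : 0 < R ^ s := Real.rpow_pos_of_pos hR s
        have hne : s ≠ 0 := ne_of_lt hs_neg
        rw [div_le_iff_of_neg hs_neg]
        have hsval : s = -(((m:ℝ) - 2*d)/2) := by rw [hs_def]; ring
        have hm2d : (0:ℝ) < (m:ℝ) - 2*d := by linarith
        have : ε ^ e * (2/((m:ℝ) - 2*d)) * s = -(ε ^ e) := by
          rw [hsval]; field_simp
        rw [this]
        linarith [hεe]
      · intro x hx
        have hx0 : 0 < x := lt_of_lt_of_le hα0 hx.1
        have hsqx : Real.sqrt (x ^ m) = x ^ ((m:ℝ)/2) := by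
          rw [Real.sqrt_eq_rpow, ← Real.rpow_natCast x m, ← Real.rpow_mul hx0.le]
          congr 1; ring
        have h1 : x ^ ((m:ℝ)/2) ≤ Real.sqrt (ε + x ^ m) := by
          rw [← hsqx]
          exact Real.sqrt_le_sqrt (by linarith : x ^ m ≤ ε + x ^ m)
        have h2 : 0 < x ^ ((m:ℝ)/2) := Real.rpow_pos_of_pos hx0 _
        have hstep : x ^ (d-1) / Real.sqrt (ε + x ^ m) ≤ x ^ (d-1) / x ^ ((m:ℝ)/2) := by
          gcongr
        refine le_trans hstep (le_of_eq ?_)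
        rw [← Real.rpow_natCast x (d-1), ← Real.rpow_sub hx0]
        congr 1
        rw [Nat.cast_sub hd1]
        push_cast; ring
    rw [hsplit]
    have := add_le_add hI1 hI2
    calc (∫ ρ in (0:ℝ)..α, ρ ^ (d - 1) / Real.sqrt (ε + ρ ^ m))
            + ∫ ρ in α..R, ρ ^ (d - 1) / Real.sqrt (ε + ρ ^ m)
        ≤ ε ^ e * (1/d) + ε ^ e * (2/((m:ℝ) - 2*d)) := this
      _ = (1/(d:ℝ) + 2/((m:ℝ) - 2*d)) * ε ^ e := by ring
  · -- R < α : the whole interval is in the "small ρ" regime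
    have h1 := hEasy R hR
    have h2 : R ^ d / d / Real.sqrt ε ≤ α ^ d / d / Real.sqrt ε := by
      have hRα : R ^ d ≤ α ^ d := pow_le_pow_left₀ hR.le hcase.le d
      gcongr
    have h3 : α ^ d / d / Real.sqrt ε = ε ^ e * (1/d) := by
      rw [hαd, div_div, mul_comm (d:ℝ), ← div_div, hkey]; ring
    have h4 : ε ^ e * (1/d) ≤ (1/(d:ℝ) + 2/((m:ℝ) - 2*d)) * ε ^ e := by
      have h5 : (0:ℝ) < 2/((m:ℝ) - 2*d) := div_pos (by norm_num) (by linarith)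
      nlinarith [hεe]
    calc (∫ ρ in (0:ℝ)..R, ρ ^ (d - 1) / Real.sqrt (ε + ρ ^ m))
        ≤ R ^ d / d / Real.sqrt ε := h1
      _ ≤ α ^ d / d / Real.sqrt ε := h2
      _ = ε ^ e * (1/d) := h3
      _ ≤ _ := h4
end
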